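/- arXiv:1502.03636 — 3 statements merged into one kernel-verified Lean document; each statement's English description precedes it below -/
import Mathlib

section
/- The labelled transition system of the recursion-free calculus CLL is a τ-pure logic LTS, i.e.: (τ-purity) if p —τ→ then p —a→ holds for no a ∈ Act; (LTS1) if there is α ∈ I(p) such that every q with p —α→ q is in F, then p ∈ F; (LTS2) if there is no q with p ⇒_F| q, then p ∈ F. Moreover, if p ∈ F and τ ∈ I(p), then every q with p —τ→ q is in F. -/
open Classical

/-- Visible actions plus the invisible action τ. -/
inductive ActT (Act : Type) : Type where
  | act : Act → ActT Act
  | tau : ActT Act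

/-- Processes of the recursion-free calculus CLL. -/
inductive Proc (Act : Type) : Type where
  | nil  : Proc Act                                -- 0
  | bot  : Proc Act                                -- ⊥
  | pre  : ActT Act → Proc Act → Proc Act          -- α.t
  | ec   : Proc Act → Proc Act → Proc Act          -- t □ t
  | conj : Proc Act → Proc Act → Proc Act          -- t ∧ t
  | disj : Proc Act → Proc Act → Proc Act          -- t ∨ t
  | par  : Set Act → Proc Act → Proc Act → Proc Act -- t ∥_A t

namespace Proc

variable {Act : Type}

/-- Whether a process has a τ-transition (structural stratification used for
the negative premises of the SOS rules). -/
def hasTau : Proc Act → Prop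
  | nil => False
  | bot => False
  | pre a _ => a = ActT.tau
  | ec t₁ t₂ => hasTau t₁ ∨ hasTau t₂
  | conj t₁ t₂ => hasTau t₁ ∨ hasTau t₂
  | disj _ _ => True
  | par _ t₁ t₂ => hasTau t₁ ∨ hasTau t₂

/-- The transition relation, given by the SOS rules of CLL_R. -/
inductive Trans : Proc Act → ActT Act → Proc Act → Prop where
  | pre : Trans (pre α t) α t
  | ecL : Trans t₁ (ActT.act a) t₁' → ¬ hasTau t₂ →
      Trans (ec t₁ t₂) (ActT.act a) t₁'
  | ecR : ¬ hasTau t₁ → Trans t₂ (ActT.act a) t₂' →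
      Trans (ec t₁ t₂) (ActT.act a) t₂'
  | ecTauL : Trans t₁ ActT.tau t₁' → Trans (ec t₁ t₂) ActT.tau (ec t₁' t₂)
  | ecTauR : Trans t₂ ActT.tau t₂' → Trans (ec t₁ t₂) ActT.tau (ec t₁ t₂')
  | conjAct : Trans t₁ (ActT.act a) t₁' → Trans t₂ (ActT.act a) t₂' →
      Trans (conj t₁ t₂) (ActT.act a) (conj t₁' t₂')
  | conjTauL : Trans t₁ ActT.tau t₁' → Trans (conj t₁ t₂) ActT.tau (conj t₁' t₂)
  | conjTauR : Trans t₂ ActT.tau t₂' → Trans (conj t₁ t₂) ActT.tau (conj t₁ t₂')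
  | disjL : Trans (disj t₁ t₂) ActT.tau t₁
  | disjR : Trans (disj t₁ t₂) ActT.tau t₂
  | parTauL : Trans t₁ ActT.tau t₁' → Trans (par A t₁ t₂) ActT.tau (par A t₁' t₂)
  | parTauR : Trans t₂ ActT.tau t₂' → Trans (par A t₁ t₂) ActT.tau (par A t₁ t₂')
  | parL : a ∉ A → Trans t₁ (ActT.act a) t₁' → ¬ hasTau t₂ →
      Trans (par A t₁ t₂) (ActT.act a) (par A t₁' t₂)
  | parR : a ∉ A → ¬ hasTau t₁ → Trans t₂ (ActT.act a) t₂' →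
      Trans (par A t₁ t₂) (ActT.act a) (par A t₁ t₂')
  | parSync : a ∈ A → Trans t₁ (ActT.act a) t₁' → Trans t₂ (ActT.act a) t₂' →
      Trans (par A t₁ t₂) (ActT.act a) (par A t₁' t₂')

/-- The ready set I(p). -/
def ready (p : Proc Act) : Set (ActT Act) := {α | ∃ q, Trans p α q}

/-- p is stable if it has no τ-transition. -/
def Stable (p : Proc Act) : Prop := ∀ q, ¬ Trans p ActT.tau q

/-- The inconsistency predicate F, as the least predicate closed under the
predicative rules of CLL_R. -/
inductive Fp : Proc Act → Prop where
  | bot : Fp bot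
  | pre : Fp t → Fp (pre α t)
  | disj : Fp t₁ → Fp t₂ → Fp (disj t₁ t₂)
  | ecL : Fp t₁ → Fp (ec t₁ t₂)
  | ecR : Fp t₂ → Fp (ec t₁ t₂)
  | parL : Fp t₁ → Fp (par A t₁ t₂)
  | parR : Fp t₂ → Fp (par A t₁ t₂)
  | conjL : Fp t₁ → Fp (conj t₁ t₂)
  | conjR : Fp t₂ → Fp (conj t₁ t₂)
  | conjReady : Stable (conj t₁ t₂) → ready t₁ ≠ ready t₂ → Fp (conj t₁ t₂)
  | conjSucc : Trans (conj t₁ t₂) α s → (∀ y, Trans (conj t₁ t₂) α y → Fp y) →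
      Fp (conj t₁ t₂)
  | conjStable :
      (∀ y, Relation.ReflTransGen (fun x z => Trans x ActT.tau z) (conj t₁ t₂) y →
        Stable y → Fp y) →
      Fp (conj t₁ t₂)

/-- One τ-step with both endpoints consistent. -/
def tauStepF (p q : Proc Act) : Prop := Trans p ActT.tau q ∧ ¬ Fp p ∧ ¬ Fp q

/-- p ⇒_F| q : a sequence of τ-transitions from p to q, all states outside F,
with q stable. -/
def epsF (p q : Proc Act) : Prop :=
  Relation.ReflTransGen tauStepF p q ∧ ¬ Fp p ∧ ¬ Fp q ∧ Stable q

/-- p =a⇒_F| q. -/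
def wkF (a : Act) (p q : Proc Act) : Prop :=
  ∃ r s, Relation.ReflTransGen tauStepF p r ∧ ¬ Fp p ∧ ¬ Fp r ∧
    Trans r (ActT.act a) s ∧ ¬ Fp s ∧
    Relation.ReflTransGen tauStepF s q ∧ ¬ Fp q ∧ Stable q

/-- R is a stable ready simulation. -/
def StableRS (R : Proc Act → Proc Act → Prop) : Prop :=
  ∀ p q, R p q →
    Stable p ∧ Stable q ∧
    (¬ Fp p → ¬ Fp q) ∧
    (∀ a p', wkF a p p' → ∃ q', wkF a q q' ∧ R p' q') ∧
    (¬ Fp p → ready p = ready q)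

/-- p ⊏̃_RS q. -/
def rsLT (p q : Proc Act) : Prop := ∃ R, StableRS R ∧ R p q

/-- p ⊑_RS q. -/
def rsLE (p q : Proc Act) : Prop :=
  ∀ p', epsF p p' → ∃ q', epsF q q' ∧ rsLT p' q'

/-- p =_RS q. -/
def rsEq (p q : Proc Act) : Prop := rsLE p q ∧ rsLE q p

/-- Basic process terms T(Σ_B): no ⊥ and no ∧. -/
inductive Basic : Proc Act → Prop where
  | nil : Basic nil
  | pre : Basic t → Basic (pre α t)
  | disj : Basic t₁ → Basic t₂ → Basic (disj t₁ t₂)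
  | ec : Basic t₁ → Basic t₂ → Basic (ec t₁ t₂)
  | par : Basic t₁ → Basic t₂ → Basic (par A t₁ t₂)

/-- General external choice □ over a finite sequence (left-nested). -/
def ecList : List (Proc Act) → Proc Act
  | [] => nil
  | t :: ts => ts.foldl ec t

/-- General disjunction ⋁ over a nonempty finite sequence (left-nested). -/
def djList : List (Proc Act) → Proc Act
  | [] => bot
  | t :: ts => ts.foldl disj t

/-- □_{i<n} a_i.t_i for a sequence of prefixed terms. -/
def ecPre (l : List (Act × Proc Act)) : Proc Act :=
  ecList (l.map fun x => pre (ActT.act x.1) x.2)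

/-- The expansion term E = ((□Ω₁) □ (□Ω₂)) □ (□Ω₃). -/
noncomputable def expTerm (A : Set Act) (l₁ l₂ : List (Act × Proc Act)) : Proc Act :=
  ec (ec
      (ecList ((l₁.filter fun x => decide (x.1 ∉ A)).map
        fun x => pre (ActT.act x.1) (par A x.2 (ecPre l₂))))
      (ecList ((l₂.filter fun x => decide (x.1 ∉ A)).map
        fun x => pre (ActT.act x.1) (par A (ecPre l₁) x.2))))
    (ecList (l₁.flatMap fun x =>
      (l₂.filter fun y => decide (y.1 = x.1 ∧ x.1 ∈ A)).map
        fun y => pre (ActT.act x.1) (par A x.2 y.2)))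

/-- Normal forms NF_B. -/
inductive NFB : Proc Act → Prop where
  | mk (ls : List (List (Act × Proc Act))) (hne : ls ≠ [])
      (hnodup : ∀ l ∈ ls, (l.map Prod.fst).Nodup)
      (hsub : ∀ l ∈ ls, ∀ x ∈ l, NFB x.2) :
      NFB (djList (ls.map ecPre))

/-- NF = NF_B ∪ {⊥}. -/
def NF (p : Proc Act) : Prop := NFB p ∨ p = bot

/-- Derivability ⊢ t ≤ t' in the proof system AX_CLL. -/
inductive Deriv : Proc Act → Proc Act → Prop where
  | refl (t) : Deriv t t
  | trans : Deriv t t' → Deriv t' t'' → Deriv t t''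
  | mono_pre : Deriv t t' → Deriv (pre α t) (pre α t')
  | mono_ec : Deriv s s' → Deriv t t' → Deriv (ec s t) (ec s' t')
  | mono_conj : Deriv s s' → Deriv t t' → Deriv (conj s t) (conj s' t')
  | mono_disj : Deriv s s' → Deriv t t' → Deriv (disj s t) (disj s' t')
  | mono_par : Deriv s s' → Deriv t t' → Deriv (par A s t) (par A s' t')
  -- external choice
  | ec_comm : Deriv (ec x y) (ec y x)
  | ec_assoc₁ : Deriv (ec (ec x y) z) (ec x (ec y z))
  | ec_assoc₂ : Deriv (ec x (ec y z)) (ec (ec x y) z)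
  | ec_idem₁ : Deriv (ec x x) x
  | ec_idem₂ : Deriv x (ec x x)
  | ec_nil₁ : Deriv (ec x nil) x
  | ec_nil₂ : Deriv x (ec x nil)
  | ec_bot₁ : Deriv (ec x bot) bot
  | ec_bot₂ : Deriv bot (ec x bot)
  -- disjunction
  | disj_comm : Deriv (disj x y) (disj y x)
  | disj_assoc₁ : Deriv (disj x (disj y z)) (disj (disj x y) z)
  | disj_assoc₂ : Deriv (disj (disj x y) z) (disj x (disj y z))
  | disj_idem₁ : Deriv (disj x x) x
  | disj_idem₂ : Deriv x (disj x x)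
  | disj_bot₁ : Deriv (disj x bot) x
  | disj_bot₂ : Deriv x (disj x bot)
  | disj_le : Deriv x (disj x y)
  -- conjunction
  | conj_comm : Deriv (conj x y) (conj y x)
  | conj_idem₁ : Deriv (conj x x) x
  | conj_idem₂ : Deriv x (conj x x)
  | conj_bot₁ : Deriv (conj x bot) bot
  | conj_bot₂ : Deriv bot (conj x bot)
  -- prefixing
  | pre_bot₁ : Deriv (pre (ActT.act a) bot) bot
  | pre_bot₂ : Deriv bot (pre (ActT.act a) bot)
  | tau_pre₁ : Deriv (pre ActT.tau x) x
  | tau_pre₂ : Deriv x (pre ActT.tau x)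
  -- parallel
  | par_comm : Deriv (par A x y) (par A y x)
  | par_bot₁ : Deriv (par A x bot) bot
  | par_bot₂ : Deriv bot (par A x bot)
  -- distribution over disjunction
  | ds_ec : Deriv (ec x (disj y z)) (disj (ec x y) (ec x z))
  | ds_conj : Deriv (conj x (disj y z)) (disj (conj x y) (conj x z))
  | ds_par : Deriv (par A x (disj y z)) (disj (par A x y) (par A x z))
  | ds_pre : Basic x → Basic y →
      Deriv (pre (ActT.act a) (disj x y)) (ec (pre (ActT.act a) x) (pre (ActT.act a) y))
  -- external choice and conjunction
  | ecc1₁ (l₁ l₂ : List (Act × Proc Act)) :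
      {a | a ∈ l₁.map Prod.fst} ≠ {a | a ∈ l₂.map Prod.fst} →
      Deriv (conj (ecPre l₁) (ecPre l₂)) bot
  | ecc1₂ (l₁ l₂ : List (Act × Proc Act)) :
      {a | a ∈ l₁.map Prod.fst} ≠ {a | a ∈ l₂.map Prod.fst} →
      Deriv bot (conj (ecPre l₁) (ecPre l₂))
  | ecc2 (l : List (Act × Proc Act × Proc Act)) :
      Deriv (ecPre (l.map fun x => (x.1, conj x.2.1 x.2.2)))
            (conj (ecPre (l.map fun x => (x.1, x.2.1)))
                  (ecPre (l.map fun x => (x.1, x.2.2))))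
  | ecc3 (l : List (Act × Proc Act × Proc Act)) :
      (l.map Prod.fst).Nodup →
      Deriv (conj (ecPre (l.map fun x => (x.1, x.2.1)))
                  (ecPre (l.map fun x => (x.1, x.2.2))))
            (ecPre (l.map fun x => (x.1, conj x.2.1 x.2.2)))
  -- expansion
  | exp1 (A : Set Act) (l₁ l₂ : List (Act × Proc Act)) :
      Deriv (par A (ecPre l₁) (ecPre l₂)) (expTerm A l₁ l₂)
  | exp2 (A : Set Act) (l₁ l₂ : List (Act × Proc Act)) :
      (∀ x ∈ l₁, Basic x.2) → (∀ x ∈ l₂, Basic x.2) →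
      Deriv (expTerm A l₁ l₂) (par A (ecPre l₁) (ecPre l₂))

end Proc

/-!
The syntactic predicate `hasTau` decides the label of every transition: a transition of `p` is a
τ-step iff `hasTau p`; this gives τ-purity. (LTS1) is an induction on the transition:
each SOS rule passes "all α-successors are inconsistent" down to a component, and for `∧` it is
itself a rule of F. (LTS2) then follows from (LTS1) for α = τ by well-founded induction along
τ-steps, which shrink terms. Closure of F under τ-steps is an induction on F.
-/

namespace Proc

variable {Act : Type} {p q : Proc Act}

lemma Trans.hasTau_iff {α : ActT Act} (h : Trans p α q) : hasTau p ↔ α = ActT.tau := by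
  induction h <;> simp_all [hasTau]

lemma not_trans_act_of_trans_tau {r : Proc Act} (hr : Trans p ActT.tau r) (a : Act) :
    ¬ Trans p (ActT.act a) q := fun hq => by
  simpa using hq.hasTau_iff.1 (hr.hasTau_iff.2 rfl)

lemma Trans.sizeOf_lt {α : ActT Act} (h : Trans p α q) : sizeOf q < sizeOf p := by
  induction h <;> simp only [Proc.ec.sizeOf_spec, Proc.conj.sizeOf_spec, Proc.pre.sizeOf_spec,
    Proc.disj.sizeOf_spec, Proc.par.sizeOf_spec] <;> omega

lemma Fp_ec_iff {t₁ t₂ : Proc Act} : Fp (ec t₁ t₂) ↔ Fp t₁ ∨ Fp t₂ :=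
  ⟨fun h => by cases h <;> simp_all, fun h => h.elim Fp.ecL Fp.ecR⟩

lemma Fp_par_iff {A : Set Act} {t₁ t₂ : Proc Act} :
    Fp (par A t₁ t₂) ↔ Fp t₁ ∨ Fp t₂ :=
  ⟨fun h => by cases h <;> simp_all, fun h => h.elim Fp.parL Fp.parR⟩

theorem Fp_of_forall_trans {α : ActT Act} (hq : Trans p α q)
    (hall : ∀ r, Trans p α r → Fp r) : Fp p := by
  induction hq with
  | pre => exact Fp.pre (hall _ Trans.pre)
  | ecL _ h₂ ih => exact Fp.ecL (ih fun r hr => hall r (Trans.ecL hr h₂))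
  | ecR h₁ _ ih => exact Fp.ecR (ih fun r hr => hall r (Trans.ecR h₁ hr))
  | @ecTauL t₁ t₁' t₂ _ ih =>
    refine Fp_ec_iff.2 (or_iff_not_imp_right.2 fun hF₂ => ih fun r hr => ?_)
    exact (Fp_ec_iff.1 (hall _ (Trans.ecTauL hr))).resolve_right hF₂
  | @ecTauR t₂ t₂' t₁ _ ih =>
    refine Fp_ec_iff.2 (or_iff_not_imp_left.2 fun hF₁ => ih fun r hr => ?_)
    exact (Fp_ec_iff.1 (hall _ (Trans.ecTauR hr))).resolve_left hF₁
  | conjAct h₁ h₂ => exact Fp.conjSucc (Trans.conjAct h₁ h₂) hall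
  | conjTauL h => exact Fp.conjSucc (Trans.conjTauL h) hall
  | conjTauR h => exact Fp.conjSucc (Trans.conjTauR h) hall
  | disjL | disjR => exact Fp.disj (hall _ Trans.disjL) (hall _ Trans.disjR)
  | @parTauL t₁ t₁' A t₂ _ ih =>
    refine Fp_par_iff.2 (or_iff_not_imp_right.2 fun hF₂ => ih fun r hr => ?_)
    exact (Fp_par_iff.1 (hall _ (Trans.parTauL hr))).resolve_right hF₂
  | @parTauR t₂ t₂' A t₁ _ ih =>
    refine Fp_par_iff.2 (or_iff_not_imp_left.2 fun hF₁ => ih fun r hr => ?_)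
    exact (Fp_par_iff.1 (hall _ (Trans.parTauR hr))).resolve_left hF₁
  | @parL A a t₁ t₁' t₂ hA _ h₂ ih =>
    refine Fp_par_iff.2 (or_iff_not_imp_right.2 fun hF₂ => ih fun r hr => ?_)
    exact (Fp_par_iff.1 (hall _ (Trans.parL hA hr h₂))).resolve_right hF₂
  | @parR A a t₁ t₂ t₂' hA h₁ _ ih =>
    refine Fp_par_iff.2 (or_iff_not_imp_left.2 fun hF₁ => ih fun r hr => ?_)
    exact (Fp_par_iff.1 (hall _ (Trans.parR hA h₁ hr))).resolve_left hF₁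
  | @parSync A a t₁ t₁' t₂ t₂' hA _ _ ih₁ ih₂ =>
    by_cases hall₁ : ∀ r, Trans t₁ (ActT.act a) r → Fp r
    · exact Fp.parL (ih₁ hall₁)
    · -- a consistent a-successor of `t₁` forces every a-successor of `t₂` into F
      obtain ⟨x, hx, hFx⟩ := not_forall₂.1 hall₁
      exact Fp.parR <| ih₂ fun r hr =>
          (Fp_par_iff.1 (hall _ (Trans.parSync hA hx hr))).resolve_left hFx

theorem Fp_of_not_exists_epsF {p : Proc Act} (h : ¬ ∃ q, epsF p q) : Fp p := by
  by_contra hp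
  obtain ⟨r, hr⟩ : ∃ r, Trans p ActT.tau r := by
    by_contra! hstab
    exact h ⟨p, .refl, hp, hp, hstab⟩
  refine hp (Fp_of_forall_trans hr fun q hq => Fp_of_not_exists_epsF ?_)
  rintro ⟨s, hqs, hq', hs, hstab⟩
  exact h ⟨s, .head ⟨hq, hp, hq'⟩ hqs, hp, hs, hstab⟩
termination_by sizeOf p
decreasing_by exact hq.sizeOf_lt

theorem Fp.of_trans_tau (hp : Fp p) (hq : Trans p ActT.tau q) : Fp q := by
  induction hp generalizing q with
  | bot => cases hq
  | pre h => cases hq; exact h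
  | disj h₁ h₂ => cases hq <;> assumption
  | ecL h ih => cases hq with
    | ecTauL ht => exact Fp.ecL (ih ht)
    | ecTauR => exact Fp.ecL h
  | ecR h ih => cases hq with
    | ecTauL => exact Fp.ecR h
    | ecTauR ht => exact Fp.ecR (ih ht)
  | parL h ih => cases hq with
    | parTauL ht => exact Fp.parL (ih ht)
    | parTauR => exact Fp.parL h
  | parR h ih => cases hq with
    | parTauL => exact Fp.parR h
    | parTauR ht => exact Fp.parR (ih ht)
  | conjL h ih => cases hq with
    | conjTauL ht => exact Fp.conjL (ih ht)
    | conjTauR => exact Fp.conjL h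
  | conjR h ih => cases hq with
    | conjTauL => exact Fp.conjR h
    | conjTauR ht => exact Fp.conjR (ih ht)
  | conjReady hstab => exact absurd hq (hstab q)
  | @conjSucc t₁ t₂ α s hs hall => cases α with
    | tau => exact hall q hq
    | act a => exact absurd hs (not_trans_act_of_trans_tau hq a)
  | conjStable hstab => cases hq with
    | conjTauL ht => exact Fp.conjStable fun y hy => hstab y (.head (Trans.conjTauL ht) hy)
    | conjTauR ht => exact Fp.conjStable fun y hy => hstab y (.head (Trans.conjTauR ht) hy)

/-- The LTS of CLL is a τ-pure LLTS, and inconsistency propagates to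
τ-successors of inconsistent unstable states. -/
theorem stmt1 {Act : Type} (p : Proc Act) :
    -- τ-purity
    ((∃ q, Trans p ActT.tau q) → ∀ (a : Act) (q : Proc Act), ¬ Trans p (ActT.act a) q) ∧
    -- (LTS1)
    ((∃ α ∈ ready p, ∀ q, Trans p α q → Fp q) → Fp p) ∧
    -- (LTS2)
    ((¬ ∃ q, epsF p q) → Fp p) ∧
    -- moreover
    (Fp p → ActT.tau ∈ ready p → ∀ q, Trans p ActT.tau q → Fp q) :=
  ⟨fun ⟨_, hr⟩ a _ => not_trans_act_of_trans_tau hr a,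
    fun ⟨_, ⟨_, hs⟩, hall⟩ => Fp_of_forall_trans hs hall,
    Fp_of_not_exists_epsF,
    fun hp _ _ => hp.of_trans_tau⟩

end Proc
end

section
/- The ready simulation preorder ⊑_RS is a precongruence for all operators of the recursion-free calculus CLL: if p ⊑_RS q then, for every process r, every α ∈ Act_τ and every A ⊆ Act, α.p ⊑_RS α.q, p □ r ⊑_RS q □ r, r □ p ⊑_RS r □ q, p ∧ r ⊑_RS q ∧ r, r ∧ p ⊑_RS r ∧ q, p ∨ r ⊑_RS q ∨ r, r ∨ p ⊑_RS r ∨ q, p ∥_A r ⊑_RS q ∥_A r, and r ∥_A p ⊑_RS r ∥_A q. -/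
open Classical

/-!
Everything reduces to stable processes. A consistent stable τ-descendant of `op p r`, for a static
operator `op` (□, ∧ or ∥_A), is `op p₀ r₀` with `p₀`, `r₀` consistent stable τ-descendants of `p`
and `r`, so it suffices that `⊏̃_RS` is preserved by these operators; prefixing and disjunction are
handled through their τ-steps. For □ and ∥_A the pairs `(op x y, op x' y')` with `x ⊏̃_RS x'` and
`y ⊏̃_RS y'` form a stable ready simulation up to `⊏̃_RS`. For ∧ the difficulty is consistency:
if `x ∧ y ∉ F` but `x' ∧ y' ∈ F` because every `a`-successor of `x' ∧ y'` is inconsistent, then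
matching a consistent weak `a`-move of `x ∧ y` by `x'` and `y'` yields a smaller pair of the same
kind, so induction on size rules this out.
-/

namespace Proc

variable {Act : Type}

abbrev TauPath : Proc Act → Proc Act → Prop :=
  Relation.ReflTransGen fun x z => Trans x ActT.tau z

def size : Proc Act → ℕ
  | nil => 1
  | bot => 1
  | pre _ t => size t + 1
  | ec t₁ t₂ => size t₁ + size t₂ + 1
  | conj t₁ t₂ => size t₁ + size t₂ + 1
  | disj t₁ t₂ => size t₁ + size t₂ + 1
  | par _ t₁ t₂ => size t₁ + size t₂ + 1

section Transitions

variable {p q t u v : Proc Act} {α : ActT Act} {a : Act} {A : Set Act}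

theorem Trans.size_lt (h : Trans p α q) : size q < size p := by
  induction h <;> simp only [size] at * <;> omega

theorem TauPath.size_le (h : TauPath p q) : size q ≤ size p := by
  induction h with
  | refl => exact le_rfl
  | tail _ hstep ih => exact hstep.size_lt.le.trans ih

theorem hasTau_of_trans_tau (h : Trans p ActT.tau q) : hasTau p := by
  generalize hα : ActT.tau = α at h
  induction h <;> simp_all [hasTau]

theorem exists_trans_tau_of_hasTau : ∀ {p : Proc Act}, hasTau p → ∃ q, Trans p ActT.tau q
  | nil, h | bot, h => h.elim
  | pre _ t, rfl => ⟨t, .pre⟩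
  | ec _ _, .inl h => let ⟨_, h⟩ := exists_trans_tau_of_hasTau h; ⟨_, .ecTauL h⟩
  | ec _ _, .inr h => let ⟨_, h⟩ := exists_trans_tau_of_hasTau h; ⟨_, .ecTauR h⟩
  | conj _ _, .inl h => let ⟨_, h⟩ := exists_trans_tau_of_hasTau h; ⟨_, .conjTauL h⟩
  | conj _ _, .inr h => let ⟨_, h⟩ := exists_trans_tau_of_hasTau h; ⟨_, .conjTauR h⟩
  | disj t _, _ => ⟨t, .disjL⟩
  | par _ _ _, .inl h => let ⟨_, h⟩ := exists_trans_tau_of_hasTau h; ⟨_, .parTauL h⟩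
  | par _ _ _, .inr h => let ⟨_, h⟩ := exists_trans_tau_of_hasTau h; ⟨_, .parTauR h⟩

theorem stable_iff_not_hasTau : Stable p ↔ ¬ hasTau p :=
  ⟨fun hs h => let ⟨q, hq⟩ := exists_trans_tau_of_hasTau h; hs q hq,
    fun h _ hq => h (hasTau_of_trans_tau hq)⟩

theorem Trans.stable_of_act (h : Trans p (ActT.act a) q) : Stable p := by
  rw [stable_iff_not_hasTau]
  generalize hα : ActT.act a = α at h
  induction h <;> subst_vars <;> simp_all [hasTau]

theorem stable_ec_iff : Stable (ec u v) ↔ Stable u ∧ Stable v := by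
  simp only [stable_iff_not_hasTau, hasTau, not_or]

theorem stable_conj_iff : Stable (conj u v) ↔ Stable u ∧ Stable v := by
  simp only [stable_iff_not_hasTau, hasTau, not_or]

theorem stable_par_iff : Stable (par A u v) ↔ Stable u ∧ Stable v := by
  simp only [stable_iff_not_hasTau, hasTau, not_or]

theorem stable_pre_act : Stable (pre (ActT.act a) t) := fun _ h => nomatch h

theorem Stable.tauPath_eq (hs : Stable p) (h : TauPath p q) : q = p := by
  rcases h.cases_head with rfl | ⟨r, hr, _⟩
  · rfl
  · exact absurd hr (hs r)

end Transitions

section Inconsistency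

variable {p q t t₁ t₂ u v : Proc Act} {α : ActT Act} {A : Set Act}

@[simp] theorem fp_pre_iff : Fp (pre α t) ↔ Fp t :=
  ⟨fun h => by cases h; assumption, .pre⟩

@[simp] theorem fp_ec_iff : Fp (ec u v) ↔ Fp u ∨ Fp v :=
  ⟨fun h => by cases h <;> simp_all, fun h => h.elim .ecL .ecR⟩

@[simp] theorem fp_par_iff : Fp (par A u v) ↔ Fp u ∨ Fp v :=
  ⟨fun h => by cases h <;> simp_all, fun h => h.elim .parL .parR⟩

@[simp] theorem fp_disj_iff : Fp (disj u v) ↔ Fp u ∧ Fp v :=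
  ⟨fun h => by cases h; constructor <;> assumption, fun h => .disj h.1 h.2⟩

theorem not_fp_of_not_fp_conj (h : ¬ Fp (conj u v)) : ¬ Fp u ∧ ¬ Fp v :=
  ⟨fun hu => h (.conjL hu), fun hv => h (.conjR hv)⟩

theorem Fp.of_tau (hF : Fp p) (hq : Trans p ActT.tau q) : Fp q := by
  induction hF generalizing q with
  | bot => cases hq
  | pre h => cases hq; exact h
  | disj h₁ h₂ => cases hq <;> assumption
  | ecL h ih => cases hq with
    | ecTauL h' => exact .ecL (ih h')
    | ecTauR _ => exact .ecL h
  | ecR h ih => cases hq with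
    | ecTauL _ => exact .ecR h
    | ecTauR h' => exact .ecR (ih h')
  | parL h ih => cases hq with
    | parTauL h' => exact .parL (ih h')
    | parTauR _ => exact .parL h
  | parR h ih => cases hq with
    | parTauL _ => exact .parR h
    | parTauR h' => exact .parR (ih h')
  | conjL h ih => cases hq with
    | conjTauL h' => exact .conjL (ih h')
    | conjTauR _ => exact .conjL h
  | conjR h ih => cases hq with
    | conjTauL _ => exact .conjR h
    | conjTauR h' => exact .conjR (ih h')
  | conjReady hs _ => exact absurd hq (hs _)
  | @conjSucc _ _ α _ htr hall =>
    cases α with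
    | tau => exact hall _ hq
    | act _ => exact absurd hq (htr.stable_of_act _)
  | conjStable hall => cases hq with
    | conjTauL h' => exact .conjStable fun y hy => hall y (.head h'.conjTauL hy)
    | conjTauR h' => exact .conjStable fun y hy => hall y (.head h'.conjTauR hy)

theorem Fp.of_tauPath (hF : Fp p) (h : TauPath p q) : Fp q := by
  induction h with
  | refl => exact hF
  | tail _ hstep ih => exact ih.of_tau hstep

/-- On a stable conjunction `conjStable` is redundant: the conjunction is the only stable state
τ-reachable from it. -/
theorem Fp.conj_cases (hs : Stable (conj t₁ t₂)) (hF : Fp (conj t₁ t₂)) :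
    Fp t₁ ∨ Fp t₂ ∨ ready t₁ ≠ ready t₂ ∨
      ∃ a s, Trans (conj t₁ t₂) (ActT.act a) s ∧
        ∀ y, Trans (conj t₁ t₂) (ActT.act a) y → Fp y := by
  generalize ht : conj t₁ t₂ = t at hs hF
  induction hF with
  | conjL h => cases ht; exact .inl h
  | conjR h => cases ht; exact .inr (.inl h)
  | conjReady _ hne => cases ht; exact .inr (.inr (.inl hne))
  | @conjSucc _ _ α s htr hall =>
    cases ht
    cases α with
    | tau => exact absurd htr (hs s)
    | act a => exact .inr (.inr (.inr ⟨a, s, htr, hall⟩))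
  | conjStable _ ih => exact ih _ .refl hs ht hs
  | _ => cases ht

theorem exists_tau_not_fp :
    ∀ {p : Proc Act}, ¬ Fp p → ¬ Stable p → ∃ q, Trans p ActT.tau q ∧ ¬ Fp q
  | nil, _, hs | bot, _, hs => absurd (fun _ h => nomatch h) hs
  | pre α t, hF, hs => by
    cases α with
    | act _ => exact absurd stable_pre_act hs
    | tau => exact ⟨t, .pre, by simpa using hF⟩
  | ec u v, hF, hs => by
    simp only [fp_ec_iff, not_or, stable_ec_iff, not_and_or] at hF hs
    rcases hs with hs | hs
    · obtain ⟨u', hu', hF'⟩ := exists_tau_not_fp hF.1 hs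
      exact ⟨_, .ecTauL hu', by simp [hF', hF.2]⟩
    · obtain ⟨v', hv', hF'⟩ := exists_tau_not_fp hF.2 hs
      exact ⟨_, .ecTauR hv', by simp [hF', hF.1]⟩
  | par A u v, hF, hs => by
    simp only [fp_par_iff, not_or, stable_par_iff, not_and_or] at hF hs
    rcases hs with hs | hs
    · obtain ⟨u', hu', hF'⟩ := exists_tau_not_fp hF.1 hs
      exact ⟨_, .parTauL hu', by simp [hF', hF.2]⟩
    · obtain ⟨v', hv', hF'⟩ := exists_tau_not_fp hF.2 hs
      exact ⟨_, .parTauR hv', by simp [hF', hF.1]⟩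
  | conj u v, hF, hs => by
    obtain ⟨q, hq⟩ : ∃ q, Trans (conj u v) ActT.tau q := by
      simpa [Stable] using hs
    by_contra! hall
    exact hF (.conjSucc hq hall)
  | disj u v, hF, _ => by
    rcases not_and_or.mp (fp_disj_iff.not.mp hF) with h | h
    · exact ⟨u, .disjL, h⟩
    · exact ⟨v, .disjR, h⟩

end Inconsistency

section WeakTransitions

variable {p q u v : Proc Act} {a : Act}

theorem not_fp_of_tauPath (h : TauPath p q) (hq : ¬ Fp q) : ¬ Fp p :=
  fun hp => hq (hp.of_tauPath h)

theorem tauPath_of_consistentPath (h : Relation.ReflTransGen tauStepF p q) : TauPath p q :=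
  Relation.ReflTransGen.mono (fun _ _ (hstep : tauStepF _ _) => hstep.1) _ _ h

theorem consistentPath_of_tauPath (h : TauPath p q) (hq : ¬ Fp q) :
    Relation.ReflTransGen tauStepF p q := by
  induction h using Relation.ReflTransGen.head_induction_on with
  | refl => exact .refl
  | head hstep hrest ih =>
    exact .head ⟨hstep, not_fp_of_tauPath (.head hstep hrest) hq, not_fp_of_tauPath hrest hq⟩ ih

theorem epsF_iff : epsF p q ↔ TauPath p q ∧ ¬ Fp q ∧ Stable q :=
  ⟨fun ⟨h, _, hq, hs⟩ => ⟨tauPath_of_consistentPath h, hq, hs⟩,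
    fun ⟨h, hq, hs⟩ => ⟨consistentPath_of_tauPath h hq, not_fp_of_tauPath h hq, hq, hs⟩⟩

theorem wkF_iff_of_stable (hp : Stable p) :
    wkF a p q ↔
      ¬ Fp p ∧ ∃ s, Trans p (ActT.act a) s ∧ TauPath s q ∧ ¬ Fp q ∧ Stable q := by
  constructor
  · rintro ⟨r, s, hpr, hp', -, hr, -, hsq, hq, hsq'⟩
    obtain rfl := hp.tauPath_eq (tauPath_of_consistentPath hpr)
    exact ⟨hp', s, hr, tauPath_of_consistentPath hsq, hq, hsq'⟩
  · rintro ⟨hp', s, hs, hsq, hq, hsq'⟩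
    exact ⟨p, s, .refl, hp', hp', hs, not_fp_of_tauPath hsq hq,
      consistentPath_of_tauPath hsq hq, hq, hsq'⟩

theorem exists_epsF (hp : ¬ Fp p) : ∃ q, epsF p q := by
  induction h : size p using Nat.strong_induction_on generalizing p with
  | _ n ih =>
  by_cases hs : Stable p
  · exact ⟨p, epsF_iff.2 ⟨.refl, hp, hs⟩⟩
  · obtain ⟨p', hp', hF'⟩ := exists_tau_not_fp hp hs
    obtain ⟨q, hq⟩ := ih _ (h ▸ hp'.size_lt) hF' rfl
    obtain ⟨hpath, hq⟩ := epsF_iff.1 hq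
    exact ⟨q, epsF_iff.2 ⟨.head hp' hpath, hq⟩⟩

theorem epsF_of_stable (hp : Stable p) : epsF p q ↔ q = p ∧ ¬ Fp p := by
  rw [epsF_iff]
  constructor
  · rintro ⟨h, hq, -⟩
    obtain rfl := hp.tauPath_eq h
    exact ⟨rfl, hq⟩
  · rintro ⟨rfl, hq⟩
    exact ⟨.refl, hq, hp⟩

theorem epsF_of_not_stable (hp : ¬ Stable p) :
    epsF p q ↔ ∃ p', Trans p ActT.tau p' ∧ epsF p' q := by
  simp only [epsF_iff]
  constructor
  · rintro ⟨h, hq, hs⟩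
    rcases h.cases_head with rfl | ⟨p', hp', h'⟩
    · exact absurd hs hp
    · exact ⟨p', hp', h', hq, hs⟩
  · rintro ⟨p', hp', h', hq, hs⟩
    exact ⟨.head hp' h', hq, hs⟩

theorem epsF_pre_tau_iff : epsF (pre ActT.tau p) q ↔ epsF p q := by
  rw [epsF_of_not_stable fun hs => hs p .pre]
  exact ⟨fun ⟨_, hp', h⟩ => by cases hp'; exact h, fun h => ⟨p, .pre, h⟩⟩

theorem epsF_disj_iff : epsF (disj u v) q ↔ epsF u q ∨ epsF v q := by
  rw [epsF_of_not_stable fun hs => hs u .disjL]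
  constructor
  · rintro ⟨_, h | h, hq⟩
    exacts [.inl hq, .inr hq]
  · rintro (hq | hq)
    exacts [⟨u, .disjL, hq⟩, ⟨v, .disjR, hq⟩]

end WeakTransitions

section StaticOperators

variable {p q s u v w z : Proc Act} {a : Act} {A : Set Act}

theorem tauPath_ec_iff :
    TauPath (ec u v) z ↔ ∃ u' v', z = ec u' v' ∧ TauPath u u' ∧ TauPath v v' := by
  constructor
  · intro h
    induction h with
    | refl => exact ⟨u, v, rfl, .refl, .refl⟩
    | tail _ hstep ih =>
      obtain ⟨u', v', rfl, hu, hv⟩ := ih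
      cases hstep with
      | ecTauL h => exact ⟨_, _, rfl, hu.tail h, hv⟩
      | ecTauR h => exact ⟨_, _, rfl, hu, hv.tail h⟩
  · rintro ⟨u', v', rfl, hu, hv⟩
    exact (hu.lift (ec · v) fun _ _ => .ecTauL).trans (hv.lift (ec u' ·) fun _ _ => .ecTauR)

theorem tauPath_conj_iff :
    TauPath (conj u v) z ↔ ∃ u' v', z = conj u' v' ∧ TauPath u u' ∧ TauPath v v' := by
  constructor
  · intro h
    induction h with
    | refl => exact ⟨u, v, rfl, .refl, .refl⟩
    | tail _ hstep ih =>
      obtain ⟨u', v', rfl, hu, hv⟩ := ih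
      cases hstep with
      | conjTauL h => exact ⟨_, _, rfl, hu.tail h, hv⟩
      | conjTauR h => exact ⟨_, _, rfl, hu, hv.tail h⟩
  · rintro ⟨u', v', rfl, hu, hv⟩
    exact (hu.lift (conj · v) fun _ _ => .conjTauL).trans
      (hv.lift (conj u' ·) fun _ _ => .conjTauR)

theorem tauPath_par_iff :
    TauPath (par A u v) z ↔ ∃ u' v', z = par A u' v' ∧ TauPath u u' ∧ TauPath v v' := by
  constructor
  · intro h
    induction h with
    | refl => exact ⟨u, v, rfl, .refl, .refl⟩
    | tail _ hstep ih =>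
      obtain ⟨u', v', rfl, hu, hv⟩ := ih
      cases hstep with
      | parTauL h => exact ⟨_, _, rfl, hu.tail h, hv⟩
      | parTauR h => exact ⟨_, _, rfl, hu, hv.tail h⟩
  · rintro ⟨u', v', rfl, hu, hv⟩
    exact (hu.lift (par A · v) fun _ _ => .parTauL).trans
      (hv.lift (par A u' ·) fun _ _ => .parTauR)

theorem mem_ready {α : ActT Act} : α ∈ ready p ↔ ∃ q, Trans p α q := Iff.rfl

theorem tau_not_mem_ready (hp : Stable p) : ActT.tau ∉ ready p :=
  fun ⟨q, hq⟩ => hp q hq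

theorem ready_eq_of_stable (hp : Stable p) (hq : Stable q)
    (h : ∀ a, ActT.act a ∈ ready p ↔ ActT.act a ∈ ready q) : ready p = ready q := by
  ext α
  cases α with
  | act a => exact h a
  | tau => simp only [tau_not_mem_ready hp, tau_not_mem_ready hq]

theorem trans_ec_act_iff (hu : Stable u) (hv : Stable v) :
    Trans (ec u v) (ActT.act a) s ↔ Trans u (ActT.act a) s ∨ Trans v (ActT.act a) s := by
  constructor
  · intro h
    cases h with
    | ecL h _ => exact .inl h
    | ecR _ h => exact .inr h
  · rintro (h | h)
    exacts [.ecL h (stable_iff_not_hasTau.1 hv), .ecR (stable_iff_not_hasTau.1 hu) h]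

theorem ready_ec (hu : Stable u) (hv : Stable v) : ready (ec u v) = ready u ∪ ready v := by
  ext α
  cases α with
  | act a => simp only [Set.mem_union, mem_ready, trans_ec_act_iff hu hv, exists_or]
  | tau => simp only [tau_not_mem_ready hu, tau_not_mem_ready hv,
      tau_not_mem_ready (stable_ec_iff.2 ⟨hu, hv⟩), Set.mem_union, or_self]

theorem wkF_ec_iff (hu : Stable u) (hv : Stable v) :
    wkF a (ec u v) w ↔ ¬ Fp u ∧ ¬ Fp v ∧ (wkF a u w ∨ wkF a v w) := by
  simp only [wkF_iff_of_stable (stable_ec_iff.2 ⟨hu, hv⟩), wkF_iff_of_stable hu,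
    wkF_iff_of_stable hv, trans_ec_act_iff hu hv, fp_ec_iff]
  aesop

theorem trans_conj_act_iff :
    Trans (conj u v) (ActT.act a) s ↔
      ∃ u' v', s = conj u' v' ∧ Trans u (ActT.act a) u' ∧ Trans v (ActT.act a) v' := by
  constructor
  · intro h
    cases h with
    | conjAct hu hv => exact ⟨_, _, rfl, hu, hv⟩
  · rintro ⟨u', v', rfl, hu, hv⟩
    exact .conjAct hu hv

theorem ready_conj (hu : Stable u) (hv : Stable v) : ready (conj u v) = ready u ∩ ready v := by
  ext α
  cases α with
  | act a =>
    simp only [Set.mem_inter_iff, mem_ready, trans_conj_act_iff]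
    aesop
  | tau => simp only [tau_not_mem_ready hu, tau_not_mem_ready hv,
      tau_not_mem_ready (stable_conj_iff.2 ⟨hu, hv⟩), Set.mem_inter_iff, and_self]

theorem wkF_conj_iff (hu : Stable u) (hv : Stable v) :
    wkF a (conj u v) w ↔ ¬ Fp (conj u v) ∧
      ∃ u₂ v₂, w = conj u₂ v₂ ∧ ¬ Fp w ∧ wkF a u u₂ ∧ wkF a v v₂ := by
  simp only [wkF_iff_of_stable (stable_conj_iff.2 ⟨hu, hv⟩), wkF_iff_of_stable hu,
    wkF_iff_of_stable hv, trans_conj_act_iff]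
  constructor
  · rintro ⟨hF, _, ⟨u₁, v₁, rfl, hu₁, hv₁⟩, hpath, hFw, hsw⟩
    obtain ⟨u₂, v₂, rfl, hpu, hpv⟩ := tauPath_conj_iff.1 hpath
    obtain ⟨hFu, hFv⟩ := not_fp_of_not_fp_conj hF
    obtain ⟨hFu₂, hFv₂⟩ := not_fp_of_not_fp_conj hFw
    obtain ⟨hsu₂, hsv₂⟩ := stable_conj_iff.1 hsw
    exact ⟨hF, u₂, v₂, rfl, hFw, ⟨hFu, u₁, hu₁, hpu, hFu₂, hsu₂⟩,
      ⟨hFv, v₁, hv₁, hpv, hFv₂, hsv₂⟩⟩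
  · rintro ⟨hF, u₂, v₂, rfl, hFw, ⟨-, u₁, hu₁, hpu, -, hsu₂⟩, ⟨-, v₁, hv₁, hpv, -, hsv₂⟩⟩
    exact ⟨hF, _, ⟨u₁, v₁, rfl, hu₁, hv₁⟩, tauPath_conj_iff.2 ⟨u₂, v₂, rfl, hpu, hpv⟩,
      hFw, stable_conj_iff.2 ⟨hsu₂, hsv₂⟩⟩

theorem trans_par_act_iff (hu : Stable u) (hv : Stable v) :
    Trans (par A u v) (ActT.act a) s ↔
      (a ∉ A ∧ ∃ u', Trans u (ActT.act a) u' ∧ s = par A u' v) ∨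
      (a ∉ A ∧ ∃ v', Trans v (ActT.act a) v' ∧ s = par A u v') ∨
      (a ∈ A ∧ ∃ u' v', Trans u (ActT.act a) u' ∧ Trans v (ActT.act a) v' ∧
        s = par A u' v') := by
  constructor
  · intro h
    cases h with
    | parL hA h _ => exact .inl ⟨hA, _, h, rfl⟩
    | parR hA _ h => exact .inr (.inl ⟨hA, _, h, rfl⟩)
    | parSync hA h₁ h₂ => exact .inr (.inr ⟨hA, _, _, h₁, h₂, rfl⟩)
  · rintro (⟨hA, u', h, rfl⟩ | ⟨hA, v', h, rfl⟩ | ⟨hA, u', v', h₁, h₂, rfl⟩)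
    · exact .parL hA h (stable_iff_not_hasTau.1 hv)
    · exact .parR hA (stable_iff_not_hasTau.1 hu) h
    · exact .parSync hA h₁ h₂

theorem act_mem_ready_par (hu : Stable u) (hv : Stable v) :
    ActT.act a ∈ ready (par A u v) ↔
      (a ∉ A ∧ (ActT.act a ∈ ready u ∨ ActT.act a ∈ ready v)) ∨
      (a ∈ A ∧ ActT.act a ∈ ready u ∧ ActT.act a ∈ ready v) := by
  simp only [mem_ready, trans_par_act_iff hu hv]
  aesop

theorem wkF_par_iff (hu : Stable u) (hv : Stable v) :
    wkF a (par A u v) w ↔ ¬ Fp u ∧ ¬ Fp v ∧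
      ((a ∉ A ∧ ∃ u₂, w = par A u₂ v ∧ wkF a u u₂) ∨
       (a ∉ A ∧ ∃ v₂, w = par A u v₂ ∧ wkF a v v₂) ∨
       (a ∈ A ∧ ∃ u₂ v₂, w = par A u₂ v₂ ∧ wkF a u u₂ ∧ wkF a v v₂)) := by
  simp only [wkF_iff_of_stable (stable_par_iff.2 ⟨hu, hv⟩), wkF_iff_of_stable hu,
    wkF_iff_of_stable hv, trans_par_act_iff hu hv, fp_par_iff, not_or]
  constructor
  · rintro ⟨⟨hFu, hFv⟩, s, hs, hpath, hFw, hsw⟩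
    refine ⟨hFu, hFv, ?_⟩
    rcases hs with ⟨hA, u₁, hu₁, rfl⟩ | ⟨hA, v₁, hv₁, rfl⟩ |
        ⟨hA, u₁, v₁, hu₁, hv₁, rfl⟩ <;>
      obtain ⟨u₂, v₂, rfl, hpu, hpv⟩ := tauPath_par_iff.1 hpath <;>
      simp only [fp_par_iff, not_or, stable_par_iff] at hFw hsw
    · obtain rfl := hv.tauPath_eq hpv
      exact .inl ⟨hA, u₂, rfl, hFu, u₁, hu₁, hpu, hFw.1, hsw.1⟩
    · obtain rfl := hu.tauPath_eq hpu
      exact .inr (.inl ⟨hA, v₂, rfl, hFv, v₁, hv₁, hpv, hFw.2, hsw.2⟩)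
    · exact .inr (.inr ⟨hA, u₂, v₂, rfl, ⟨hFu, u₁, hu₁, hpu, hFw.1, hsw.1⟩,
        ⟨hFv, v₁, hv₁, hpv, hFw.2, hsw.2⟩⟩)
  · rintro ⟨hFu, hFv, ⟨hA, u₂, rfl, -, u₁, hu₁, hpu, hFu₂, hsu₂⟩ |
      ⟨hA, v₂, rfl, -, v₁, hv₁, hpv, hFv₂, hsv₂⟩ |
      ⟨hA, u₂, v₂, rfl, ⟨-, u₁, hu₁, hpu, hFu₂, hsu₂⟩,
        ⟨-, v₁, hv₁, hpv, hFv₂, hsv₂⟩⟩⟩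
    · exact ⟨⟨hFu, hFv⟩, _, .inl ⟨hA, u₁, hu₁, rfl⟩,
        tauPath_par_iff.2 ⟨_, _, rfl, hpu, .refl⟩, by simp [hFu₂, hFv],
        stable_par_iff.2 ⟨hsu₂, hv⟩⟩
    · exact ⟨⟨hFu, hFv⟩, _, .inr (.inl ⟨hA, v₁, hv₁, rfl⟩),
        tauPath_par_iff.2 ⟨_, _, rfl, .refl, hpv⟩, by simp [hFu, hFv₂],
        stable_par_iff.2 ⟨hu, hsv₂⟩⟩
    · exact ⟨⟨hFu, hFv⟩, _, .inr (.inr ⟨hA, u₁, v₁, hu₁, hv₁, rfl⟩),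
        tauPath_par_iff.2 ⟨_, _, rfl, hpu, hpv⟩, by simp [hFu₂, hFv₂],
        stable_par_iff.2 ⟨hsu₂, hsv₂⟩⟩

end StaticOperators

section ReadySimulation

variable {p q u u' v v' : Proc Act}

/-- The clauses of `StableRS` at one pair, with weak successors related by `S`. -/
structure ReadySimStep (S : Proc Act → Proc Act → Prop) (p q : Proc Act) : Prop where
  stable_left : Stable p
  stable_right : Stable q
  consistent : ¬ Fp p → ¬ Fp q
  sim : ∀ a p', wkF a p p' → ∃ q', wkF a q q' ∧ S p' q'
  ready_eq : ¬ Fp p → ready p = ready q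

theorem ReadySimStep.mono {S S' : Proc Act → Proc Act → Prop} (h : ReadySimStep S p q)
    (hS : ∀ x y, S x y → S' x y) : ReadySimStep S' p q where
  __ := h
  sim a p' hp' := let ⟨q', hq', hS'⟩ := h.sim a p' hp'; ⟨q', hq', hS _ _ hS'⟩

theorem stableRS_of_readySimStep {R : Proc Act → Proc Act → Prop}
    (hR : ∀ p q, R p q → ReadySimStep R p q) : StableRS R := fun p q hpq =>
  let h := hR p q hpq
  ⟨h.stable_left, h.stable_right, h.consistent, h.sim, h.ready_eq⟩

theorem rsLT.step (h : rsLT p q) : ReadySimStep rsLT p q := by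
  obtain ⟨R, hR, hpq⟩ := h
  obtain ⟨h₁, h₂, h₃, h₄, h₅⟩ := hR p q hpq
  refine ⟨h₁, h₂, h₃, fun a p' hp' => ?_, h₅⟩
  obtain ⟨q', hq', hR'⟩ := h₄ a p' hp'
  exact ⟨q', hq', R, hR, hR'⟩

/-- Coinduction up to `⊏̃_RS`. -/
theorem rsLT_of_readySimStep {R : Proc Act → Proc Act → Prop}
    (hR : ∀ p q, R p q → ReadySimStep (fun x y => R x y ∨ rsLT x y) p q) (h : R p q) :
    rsLT p q := by
  refine ⟨fun x y => R x y ∨ rsLT x y, stableRS_of_readySimStep ?_, .inl h⟩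
  rintro x y (hxy | hxy)
  exacts [hR x y hxy, hxy.step.mono fun _ _ => .inr]

theorem rsLT_refl (hp : Stable p) : rsLT p p := by
  refine rsLT_of_readySimStep (R := fun x y => x = y ∧ Stable x) ?_ ⟨rfl, hp⟩
  rintro x _ ⟨rfl, hx⟩
  refine ⟨hx, hx, id, fun a x' hx' => ⟨x', hx', .inl ⟨rfl, ?_⟩⟩, fun _ => rfl⟩
  obtain ⟨-, -, -, -, -, -, -, -, -, hs⟩ := hx'
  exact hs

def rsLTLift₂ (op : Proc Act → Proc Act → Proc Act) (s t : Proc Act) : Prop :=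
  ∃ x y x' y', s = op x y ∧ t = op x' y' ∧ rsLT x x' ∧ rsLT y y'

theorem rsLT_map₂ {op : Proc Act → Proc Act → Proc Act}
    (hop : ∀ x y x' y', rsLT x x' → rsLT y y' →
      ReadySimStep (fun s t => rsLTLift₂ op s t ∨ rsLT s t) (op x y) (op x' y'))
    (hu : rsLT u u') (hv : rsLT v v') : rsLT (op u v) (op u' v') := by
  refine rsLT_of_readySimStep (R := rsLTLift₂ op) ?_ ⟨u, v, u', v', rfl, rfl, hu, hv⟩
  rintro _ _ ⟨x, y, x', y', rfl, rfl, hx, hy⟩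
  exact hop x y x' y' hx hy

end ReadySimulation

section Congruence

variable {p q u u' v v' x y : Proc Act} {A : Set Act}

theorem rsLT_ec (hu : rsLT u u') (hv : rsLT v v') : rsLT (ec u v) (ec u' v') := by
  refine rsLT_map₂ (fun x y x' y' hx hy => ?_) hu hv
  have hx := hx.step
  have hy := hy.step
  refine ⟨stable_ec_iff.2 ⟨hx.stable_left, hy.stable_left⟩,
    stable_ec_iff.2 ⟨hx.stable_right, hy.stable_right⟩, fun hF => ?_, fun a w hw => ?_,
    fun hF => ?_⟩
  · simp only [fp_ec_iff, not_or] at hF ⊢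
    exact ⟨hx.consistent hF.1, hy.consistent hF.2⟩
  · obtain ⟨hFx, hFy, hw | hw⟩ := (wkF_ec_iff hx.stable_left hy.stable_left).1 hw
    · obtain ⟨w', hw', hlt⟩ := hx.sim a w hw
      exact ⟨w', (wkF_ec_iff hx.stable_right hy.stable_right).2
        ⟨hx.consistent hFx, hy.consistent hFy, .inl hw'⟩, .inr hlt⟩
    · obtain ⟨w', hw', hlt⟩ := hy.sim a w hw
      exact ⟨w', (wkF_ec_iff hx.stable_right hy.stable_right).2
        ⟨hx.consistent hFx, hy.consistent hFy, .inr hw'⟩, .inr hlt⟩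
  · simp only [fp_ec_iff, not_or] at hF
    rw [ready_ec hx.stable_left hy.stable_left, ready_ec hx.stable_right hy.stable_right,
      hx.ready_eq hF.1, hy.ready_eq hF.2]

theorem rsLT_par (hu : rsLT u u') (hv : rsLT v v') : rsLT (par A u v) (par A u' v') := by
  refine rsLT_map₂ (fun x y x' y' hx' hy' => ?_) hu hv
  have hx := hx'.step
  have hy := hy'.step
  refine ⟨stable_par_iff.2 ⟨hx.stable_left, hy.stable_left⟩,
    stable_par_iff.2 ⟨hx.stable_right, hy.stable_right⟩, fun hF => ?_, fun a w hw => ?_,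
    fun hF => ?_⟩
  · simp only [fp_par_iff, not_or] at hF ⊢
    exact ⟨hx.consistent hF.1, hy.consistent hF.2⟩
  · obtain ⟨hFx, hFy, ⟨hA, x₂, rfl, hwx⟩ | ⟨hA, y₂, rfl, hwy⟩ |
        ⟨hA, x₂, y₂, rfl, hwx, hwy⟩⟩ :=
      (wkF_par_iff hx.stable_left hy.stable_left).1 hw
    · obtain ⟨w', hw', hlt⟩ := hx.sim a x₂ hwx
      exact ⟨par A w' y', (wkF_par_iff hx.stable_right hy.stable_right).2
        ⟨hx.consistent hFx, hy.consistent hFy, .inl ⟨hA, w', rfl, hw'⟩⟩,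
        .inl ⟨x₂, y, w', y', rfl, rfl, hlt, hy'⟩⟩
    · obtain ⟨w', hw', hlt⟩ := hy.sim a y₂ hwy
      exact ⟨par A x' w', (wkF_par_iff hx.stable_right hy.stable_right).2
        ⟨hx.consistent hFx, hy.consistent hFy, .inr (.inl ⟨hA, w', rfl, hw'⟩)⟩,
        .inl ⟨x, y₂, x', w', rfl, rfl, hx', hlt⟩⟩
    · obtain ⟨x₂', hwx', hltx⟩ := hx.sim a x₂ hwx
      obtain ⟨y₂', hwy', hlty⟩ := hy.sim a y₂ hwy
      exact ⟨par A x₂' y₂', (wkF_par_iff hx.stable_right hy.stable_right).2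
        ⟨hx.consistent hFx, hy.consistent hFy,
          .inr (.inr ⟨hA, x₂', y₂', rfl, hwx', hwy'⟩)⟩,
        .inl ⟨x₂, y₂, x₂', y₂', rfl, rfl, hltx, hlty⟩⟩
  · simp only [fp_par_iff, not_or] at hF
    refine ready_eq_of_stable (stable_par_iff.2 ⟨hx.stable_left, hy.stable_left⟩)
      (stable_par_iff.2 ⟨hx.stable_right, hy.stable_right⟩) fun a => ?_
    rw [act_mem_ready_par hx.stable_left hy.stable_left,
      act_mem_ready_par hx.stable_right hy.stable_right, hx.ready_eq hF.1, hy.ready_eq hF.2]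

theorem exists_wkF_conj (hx : Stable x) (hy : Stable y) (hF : ¬ Fp (conj x y)) {a : Act}
    (hxa : ActT.act a ∈ ready x) (hya : ActT.act a ∈ ready y) :
    ∃ w, wkF a (conj x y) w := by
  obtain ⟨x₁, hx₁⟩ := hxa
  obtain ⟨y₁, hy₁⟩ := hya
  obtain ⟨s, hs, hFs⟩ : ∃ s, Trans (conj x y) (ActT.act a) s ∧ ¬ Fp s := by
    by_contra! hall
    exact hF (.conjSucc (.conjAct hx₁ hy₁) hall)
  obtain ⟨w, hw⟩ := exists_epsF hFs
  obtain ⟨hpath, hFw, hsw⟩ := epsF_iff.1 hw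
  exact ⟨w, (wkF_iff_of_stable (stable_conj_iff.2 ⟨hx, hy⟩)).2
    ⟨hF, s, hs, hpath, hFw, hsw⟩⟩

theorem not_fp_conj_of_rsLT {x x' y y' : Proc Act} (hx : rsLT x x') (hy : rsLT y y')
    (hF : ¬ Fp (conj x y)) :
    ¬ Fp (conj x' y') := by
  intro hF'
  have hx := hx.step
  have hy := hy.step
  obtain ⟨hFx, hFy⟩ := not_fp_of_not_fp_conj hF
  have hs := stable_conj_iff.2 ⟨hx.stable_left, hy.stable_left⟩
  rcases hF'.conj_cases (stable_conj_iff.2 ⟨hx.stable_right, hy.stable_right⟩) with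
    hF' | hF' | hne | ⟨a, s', hs', hall⟩
  · exact hx.consistent hFx hF'
  · exact hy.consistent hFy hF'
  · exact hF (.conjReady hs (by rwa [hx.ready_eq hFx, hy.ready_eq hFy]))
  · obtain ⟨x₁', y₁', rfl, hx₁', hy₁'⟩ := trans_conj_act_iff.1 hs'
    obtain ⟨w, hw⟩ := exists_wkF_conj hx.stable_left hy.stable_left hF
      (by rw [hx.ready_eq hFx]; exact ⟨_, hx₁'⟩)
      (by rw [hy.ready_eq hFy]; exact ⟨_, hy₁'⟩)
    obtain ⟨-, x₂, y₂, rfl, hF₂, hwx, hwy⟩ :=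
      (wkF_conj_iff hx.stable_left hy.stable_left).1 hw
    obtain ⟨x₂', hwx', hltx⟩ := hx.sim a x₂ hwx
    obtain ⟨y₂', hwy', hlty⟩ := hy.sim a y₂ hwy
    obtain ⟨-, x₁, hx₁, hpx, -⟩ := (wkF_iff_of_stable hx.stable_right).1 hwx'
    obtain ⟨-, y₁, hy₁, hpy, -⟩ := (wkF_iff_of_stable hy.stable_right).1 hwy'
    have hF₂' : Fp (conj x₂' y₂') :=
      (hall _ (.conjAct hx₁ hy₁)).of_tauPath (tauPath_conj_iff.2 ⟨_, _, rfl, hpx, hpy⟩)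
    have : size x₂' + size y₂' < size x' + size y' := by
      have := hx₁.size_lt; have := hy₁.size_lt; have := hpx.size_le; have := hpy.size_le
      omega
    exact not_fp_conj_of_rsLT hltx hlty hF₂ hF₂'
termination_by size x' + size y'

theorem rsLT_conj (hu : rsLT u u') (hv : rsLT v v') : rsLT (conj u v) (conj u' v') := by
  refine rsLT_map₂ (fun x y x' y' hx' hy' => ?_) hu hv
  have hx := hx'.step
  have hy := hy'.step
  refine ⟨stable_conj_iff.2 ⟨hx.stable_left, hy.stable_left⟩,
    stable_conj_iff.2 ⟨hx.stable_right, hy.stable_right⟩, not_fp_conj_of_rsLT hx' hy',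
    fun a w hw => ?_, fun hF => ?_⟩
  · obtain ⟨hF, x₂, y₂, rfl, hF₂, hwx, hwy⟩ :=
      (wkF_conj_iff hx.stable_left hy.stable_left).1 hw
    obtain ⟨x₂', hwx', hltx⟩ := hx.sim a x₂ hwx
    obtain ⟨y₂', hwy', hlty⟩ := hy.sim a y₂ hwy
    exact ⟨conj x₂' y₂', (wkF_conj_iff hx.stable_right hy.stable_right).2
      ⟨not_fp_conj_of_rsLT hx' hy' hF, x₂', y₂', rfl, not_fp_conj_of_rsLT hltx hlty hF₂,
        hwx', hwy'⟩, .inl ⟨x₂, y₂, x₂', y₂', rfl, rfl, hltx, hlty⟩⟩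
  · obtain ⟨hFx, hFy⟩ := not_fp_of_not_fp_conj hF
    rw [ready_conj hx.stable_left hy.stable_left, ready_conj hx.stable_right hy.stable_right,
      hx.ready_eq hFx, hy.ready_eq hFy]

theorem rsLE.not_fp (h : rsLE p q) (hp : ¬ Fp p) : ¬ Fp q :=
  let ⟨_, hp'⟩ := exists_epsF hp
  let ⟨_, ⟨_, hq, _⟩, _⟩ := h _ hp'
  hq

theorem ready_pre {α : ActT Act} : ready (pre α p) = {α} := by
  ext β
  exact ⟨fun ⟨_, h⟩ => by cases h; rfl, fun h => h ▸ ⟨p, .pre⟩⟩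

theorem rsLT_pre_act {a : Act} (h : rsLE p q) :
    rsLT (pre (ActT.act a) p) (pre (ActT.act a) q) := by
  refine rsLT_of_readySimStep
    (R := fun s t => ∃ x y, s = pre (ActT.act a) x ∧ t = pre (ActT.act a) y ∧ rsLE x y) ?_
    ⟨p, q, rfl, rfl, h⟩
  rintro _ _ ⟨x, y, rfl, rfl, h⟩
  have hFy : ¬ Fp (pre (ActT.act a) x) → ¬ Fp (pre (ActT.act a) y) := by
    simpa only [fp_pre_iff] using h.not_fp
  refine ⟨stable_pre_act, stable_pre_act, hFy, fun b w hw => ?_,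
    fun _ => by rw [ready_pre, ready_pre]⟩
  obtain ⟨hF, s, hs, hpath, hFw, hsw⟩ := (wkF_iff_of_stable stable_pre_act).1 hw
  cases hs
  obtain ⟨w', hw', hlt⟩ := h w (epsF_iff.2 ⟨hpath, hFw, hsw⟩)
  obtain ⟨hpath', hFw', hsw'⟩ := epsF_iff.1 hw'
  exact ⟨w', (wkF_iff_of_stable stable_pre_act).2 ⟨hFy hF, y, .pre, hpath', hFw', hsw'⟩,
    .inr hlt⟩

end Congruence

section Precongruence

variable {p q r s : Proc Act}

theorem rsLE_refl (p : Proc Act) : rsLE p p :=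
  fun p' hp' => ⟨p', hp', rsLT_refl hp'.2.2.2⟩

theorem rsLE_pre {α : ActT Act} (h : rsLE p q) : rsLE (pre α p) (pre α q) := by
  intro p' hp'
  cases α with
  | act a =>
    obtain ⟨rfl, hF⟩ := (epsF_of_stable stable_pre_act).1 hp'
    have hF' : ¬ Fp (pre (ActT.act a) q) := by
      simpa only [fp_pre_iff] using h.not_fp (by simpa only [fp_pre_iff] using hF)
    exact ⟨_, (epsF_of_stable stable_pre_act).2 ⟨rfl, hF'⟩, rsLT_pre_act h⟩
  | tau =>
    obtain ⟨q', hq', hlt⟩ := h p' (epsF_pre_tau_iff.1 hp')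
    exact ⟨q', epsF_pre_tau_iff.2 hq', hlt⟩

theorem rsLE_disj (hp : rsLE p q) (hr : rsLE r s) : rsLE (disj p r) (disj q s) := by
  intro z hz
  rcases epsF_disj_iff.1 hz with hz | hz
  · obtain ⟨q', hq', hlt⟩ := hp z hz
    exact ⟨q', epsF_disj_iff.2 (.inl hq'), hlt⟩
  · obtain ⟨s', hs', hlt⟩ := hr z hz
    exact ⟨s', epsF_disj_iff.2 (.inr hs'), hlt⟩

theorem rsLE_map₂ {op : Proc Act → Proc Act → Proc Act}
    (hpath : ∀ u v z, TauPath (op u v) z ↔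
      ∃ u' v', z = op u' v' ∧ TauPath u u' ∧ TauPath v v')
    (hstable : ∀ u v, Stable (op u v) ↔ Stable u ∧ Stable v)
    (hFp : ∀ u v, ¬ Fp (op u v) → ¬ Fp u ∧ ¬ Fp v)
    (hcongr : ∀ u u' v v', rsLT u u' → rsLT v v' → rsLT (op u v) (op u' v'))
    (hp : rsLE p q) (hr : rsLE r s) : rsLE (op p r) (op q s) := by
  intro z hz
  obtain ⟨hpz, hFz, hsz⟩ := epsF_iff.1 hz
  obtain ⟨p₀, r₀, rfl, hpp, hrr⟩ := (hpath _ _ _).1 hpz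
  obtain ⟨hsp, hsr⟩ := (hstable _ _).1 hsz
  obtain ⟨hFp, hFr⟩ := hFp _ _ hFz
  obtain ⟨q₀, hq₀, hltq⟩ := hp p₀ (epsF_iff.2 ⟨hpp, hFp, hsp⟩)
  obtain ⟨s₀, hs₀, hlts⟩ := hr r₀ (epsF_iff.2 ⟨hrr, hFr, hsr⟩)
  obtain ⟨hqq, -, hsq⟩ := epsF_iff.1 hq₀
  obtain ⟨hss, -, hss'⟩ := epsF_iff.1 hs₀
  have hlt := hcongr _ _ _ _ hltq hlts
  exact ⟨op q₀ s₀, epsF_iff.2 ⟨(hpath _ _ _).2 ⟨_, _, rfl, hqq, hss⟩,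
    hlt.step.consistent hFz, (hstable _ _).2 ⟨hsq, hss'⟩⟩, hlt⟩

theorem rsLE_ec (hp : rsLE p q) (hr : rsLE r s) : rsLE (ec p r) (ec q s) :=
  rsLE_map₂ (fun _ _ _ => tauPath_ec_iff) (fun _ _ => stable_ec_iff)
    (fun _ _ h => by simpa only [fp_ec_iff, not_or] using h) (fun _ _ _ _ => rsLT_ec) hp hr

theorem rsLE_conj (hp : rsLE p q) (hr : rsLE r s) : rsLE (conj p r) (conj q s) :=
  rsLE_map₂ (fun _ _ _ => tauPath_conj_iff) (fun _ _ => stable_conj_iff)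
    (fun _ _ => not_fp_of_not_fp_conj) (fun _ _ _ _ => rsLT_conj) hp hr

theorem rsLE_par {A : Set Act} (hp : rsLE p q) (hr : rsLE r s) : rsLE (par A p r) (par A q s) :=
  rsLE_map₂ (fun _ _ _ => tauPath_par_iff) (fun _ _ => stable_par_iff)
    (fun _ _ h => by simpa only [fp_par_iff, not_or] using h) (fun _ _ _ _ => rsLT_par) hp hr

end Precongruence

/-- ⊑_RS is a precongruence for all operators of CLL. -/
theorem stmt2 {Act : Type} {p q : Proc Act} (h : rsLE p q) :
    (∀ α : ActT Act, rsLE (pre α p) (pre α q)) ∧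
    (∀ r : Proc Act, rsLE (ec p r) (ec q r)) ∧
    (∀ r : Proc Act, rsLE (ec r p) (ec r q)) ∧
    (∀ r : Proc Act, rsLE (conj p r) (conj q r)) ∧
    (∀ r : Proc Act, rsLE (conj r p) (conj r q)) ∧
    (∀ r : Proc Act, rsLE (disj p r) (disj q r)) ∧
    (∀ r : Proc Act, rsLE (disj r p) (disj r q)) ∧
    (∀ (A : Set Act) (r : Proc Act), rsLE (par A p r) (par A q r)) ∧
    (∀ (A : Set Act) (r : Proc Act), rsLE (par A r p) (par A r q)) :=
  ⟨fun _ => rsLE_pre h,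
    fun r => rsLE_ec h (rsLE_refl r), fun r => rsLE_ec (rsLE_refl r) h,
    fun r => rsLE_conj h (rsLE_refl r), fun r => rsLE_conj (rsLE_refl r) h,
    fun r => rsLE_disj h (rsLE_refl r), fun r => rsLE_disj (rsLE_refl r) h,
    fun _ r => rsLE_par h (rsLE_refl r), fun _ r => rsLE_par (rsLE_refl r) h⟩

end Proc
end

section
/- No basic process term is inconsistent: T(Σ_B) ∩ F = ∅, i.e., every process generated without ⊥ and without ∧ lies outside the inconsistency predicate F. -/
open Classical

namespace Proc

/-- No basic process term is inconsistent: T(Σ_B) ∩ F = ∅. -/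
theorem stmt3 {Act : Type} (p : Proc Act) (hp : Basic p) : ¬ Fp p := by
  induction hp with
  | nil => nofun
  | pre _ ih => intro h; cases h with | pre h => exact ih h
  | disj _ _ ih₁ _ => intro h; cases h with | disj h₁ _ => exact ih₁ h₁
  | ec _ _ ih₁ ih₂ =>
    intro h
    cases h with
    | ecL h => exact ih₁ h
    | ecR h => exact ih₂ h
  | par _ _ ih₁ ih₂ =>
    intro h
    cases h with
    | parL h => exact ih₁ h
    | parR h => exact ih₂ h

end Proc
end
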